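/- If a finite bounded poset P admits a self-consistent topological CL-labeling, then P admits a generalized recursive atom ordering. -/

import Mathlib

/-- `l` is a saturated chain from `x` to `y` in the poset `α`:
a list `x = x₀ ⋖ x₁ ⋖ ⋯ ⋖ x_k = y` of elements, each covered by the next. -/
def SatChain {α : Type*} [PartialOrder α] (x y : α) (l : List α) : Prop :=
  l.Chain' (· ⋖ ·) ∧ l.head? = some x ∧ l.getLast? = some y

/-- A chain-atom ordering of a bounded poset `α`: for each `u : α` and each root `r`
(a saturated chain from `⊥` to `u`, recorded as a list ending in `u`), a strict linear
order on the atoms of the rooted interval `[u, ⊤]_r`, i.e. on the elements covering `u`.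
The relation is recorded for all pairs `(u, r)`; only genuine roots are relevant. -/
structure ChainAtomOrdering (α : Type*) [PartialOrder α] where
  lt : α → List α → α → α → Prop
  irrefl : ∀ u r a, ¬ lt u r a a
  trans : ∀ u r a b c, lt u r a b → lt u r b c → lt u r a c
  total : ∀ u r a b, u ⋖ a → u ⋖ b → a ≠ b → lt u r a b ∨ lt u r b a

/-- `a` is the first atom of the rooted interval `[u,v]_r` in the chain-atom ordering `S`. -/
def ChainAtomOrdering.IsFirstAtom {α : Type*} [PartialOrder α] (S : ChainAtomOrdering α)
    (u v : α) (r : List α) (a : α) : Prop :=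
  u ⋖ a ∧ a ≤ v ∧ ∀ b, u ⋖ b → b ≤ v → b ≠ a → S.lt u r a b

/-- `IsGRAO S u v r`: the restriction of the chain-atom ordering `S` to the rooted
interval `[u,v]_r` is a generalized recursive atom ordering (GRAO) of `[u,v]`.
Either `[u,v]` has length 1, or: (i)(a) for each atom `a` of `[u,v]_r` the restriction
to `[a,v]_{r·a}` is a GRAO; (i)(b) for each atom `a` and each `a ⋖ x ⋖ w ≤ v`, either
the first atom of `[a,w]_{r·a}` lies above some atom of `[u,v]_r` earlier than `a`, or
no atom of `[a,w]_{r·a}` does; (ii) if atoms `ai, aj` of `[u,v]_r` with `ai` earlier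
than `aj` lie below a common `y ≤ v`, then some `z` with `aj ⋖ z ≤ y` lies above an
atom of `[u,v]_r` earlier than `aj`. -/
inductive IsGRAO {α : Type*} [PartialOrder α] (S : ChainAtomOrdering α) :
    α → α → List α → Prop
  | base (u v : α) (r : List α) (h : u ⋖ v) : IsGRAO S u v r
  | step (u v : α) (r : List α)
      (ia : ∀ a, u ⋖ a → a ≤ v → IsGRAO S a v (r ++ [a]))
      (ib : ∀ a x w, u ⋖ a → a ≤ v → a ⋖ x → x ⋖ w → w ≤ v →
        (∃ b, S.IsFirstAtom a w (r ++ [a]) b ∧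
          ∃ a', u ⋖ a' ∧ a' ≤ v ∧ S.lt u r a' a ∧ a' < b) ∨
        (∀ b a', a ⋖ b → b ≤ w → u ⋖ a' → a' ≤ v → S.lt u r a' a → ¬ a' < b))
      (ii : ∀ ai aj y, u ⋖ ai → ai ≤ v → u ⋖ aj → aj ≤ v → S.lt u r ai aj →
        ai < y → aj < y → y ≤ v →
        ∃ ak z, u ⋖ ak ∧ ak ≤ v ∧ S.lt u r ak aj ∧ aj ⋖ z ∧ z ≤ y ∧ ak < z) :
      IsGRAO S u v r

/-- `IsRAO S u v r`: the restriction of the chain-atom ordering `S` to the rooted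
interval `[u,v]_r` is a recursive atom ordering (RAO) of `[u,v]`.  It differs from a
GRAO only in condition (i)(b): for each atom `a` of `[u,v]_r`, every atom of
`[a,v]_{r·a}` lying above some atom of `[u,v]_r` earlier than `a` must precede every
atom of `[a,v]_{r·a}` lying above no such atom. -/
inductive IsRAO {α : Type*} [PartialOrder α] (S : ChainAtomOrdering α) :
    α → α → List α → Prop
  | base (u v : α) (r : List α) (h : u ⋖ v) : IsRAO S u v r
  | step (u v : α) (r : List α)
      (ia : ∀ a, u ⋖ a → a ≤ v → IsRAO S a v (r ++ [a]))
      (ib : ∀ a b c, u ⋖ a → a ≤ v → a ⋖ b → b ≤ v → a ⋖ c → c ≤ v →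
        (∃ a', u ⋖ a' ∧ a' ≤ v ∧ S.lt u r a' a ∧ a' < b) →
        (∀ a', u ⋖ a' → a' ≤ v → S.lt u r a' a → ¬ a' < c) →
        S.lt a (r ++ [a]) b c)
      (ii : ∀ ai aj y, u ⋖ ai → ai ≤ v → u ⋖ aj → aj ≤ v → S.lt u r ai aj →
        ai < y → aj < y → y ≤ v →
        ∃ ak z, u ⋖ ak ∧ ak ≤ v ∧ S.lt u r ak aj ∧ aj ⋖ z ∧ z ≤ y ∧ ak < z) :
      IsRAO S u v r

/-- The label sequence of a saturated chain, read from bottom to top.  Here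
`lab r x y` is the label of the cover relation `x ⋖ y` with respect to the root `r`
(a saturated chain from `⊥` to `x` recorded as a list ending in `x`); this encodes a
chain-edge (CE-) labeling.  The first list argument is the root of the head of the
chain, the second is the chain itself. -/
def labelSeq {α Q : Type*} (lab : List α → α → α → Q) : List α → List α → List Q
  | _, [] => []
  | _, [_] => []
  | r, x :: y :: c => lab r x y :: labelSeq lab (r ++ [y]) (y :: c)

/-- `u ⋖ v ⋖ w` is a topological ascent with respect to the root `r`: the label
sequence of `u ⋖ v ⋖ w` is lexicographically strictly smaller than that of every
other saturated chain from `u` to `w`. -/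
def TopAscent {α Q : Type*} [PartialOrder α] [LinearOrder Q]
    (lab : List α → α → α → Q) (r : List α) (u v w : α) : Prop :=
  u ⋖ v ∧ v ⋖ w ∧ ∀ c, SatChain u w c → c ≠ [u, v, w] →
    List.Lex (· < ·) (labelSeq lab r [u, v, w]) (labelSeq lab r c)

/-- The saturated chain (second argument) is topologically ascending with respect to
the root given as first argument: every consecutive triple on it is a topological
ascent (with respect to the appropriately extended root). -/
def TopAscending {α Q : Type*} [PartialOrder α] [LinearOrder Q]
    (lab : List α → α → α → Q) : List α → List α → Prop
  | r, u :: v :: w :: c => TopAscent lab r u v w ∧ TopAscending lab (r ++ [v]) (v :: w :: c)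
  | _, _ => True

/-- `lab` is a CC-labeling: every rooted interval `[u,v]_r` has exactly one
topologically ascending saturated chain, distinct saturated chains of `[u,v]_r` have
distinct label sequences, and no label sequence is a prefix of another. -/
def IsCCLabeling {α Q : Type*} [PartialOrder α] [OrderBot α] [LinearOrder Q]
    (lab : List α → α → α → Q) : Prop :=
  ∀ u v r, SatChain (⊥ : α) u r → u ≤ v →
    (∃! c, SatChain u v c ∧ TopAscending lab r c) ∧
    (∀ c c', SatChain u v c → SatChain u v c' → c ≠ c' →
      labelSeq lab r c ≠ labelSeq lab r c' ∧
      ¬ labelSeq lab r c <+: labelSeq lab r c')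

/-- `lab` is a CL-labeling: every rooted interval `[u,v]_r` has exactly one saturated
chain with strictly increasing label sequence, and this label sequence is
lexicographically strictly smaller than that of every other saturated chain. -/
def IsCLLabeling {α Q : Type*} [PartialOrder α] [OrderBot α] [LinearOrder Q]
    (lab : List α → α → α → Q) : Prop :=
  ∀ u v r, SatChain (⊥ : α) u r → u ≤ v →
    ∃ c, SatChain u v c ∧ List.Chain' (· < ·) (labelSeq lab r c) ∧
      (∀ c', SatChain u v c' → List.Chain' (· < ·) (labelSeq lab r c') → c' = c) ∧
      (∀ c', SatChain u v c' → c' ≠ c →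
        List.Lex (· < ·) (labelSeq lab r c) (labelSeq lab r c'))

/-- `lab` is a topological CL-labeling: every rooted interval `[u,v]_r` has a unique
saturated chain with lexicographically smallest label sequence, and every other
saturated chain of `[u,v]_r` contains at least one topological descent (i.e. is not
topologically ascending). -/
def IsTopolCLLabeling {α Q : Type*} [PartialOrder α] [OrderBot α] [LinearOrder Q]
    (lab : List α → α → α → Q) : Prop :=
  ∀ u v r, SatChain (⊥ : α) u r → u ≤ v →
    ∃ c, SatChain u v c ∧
      (∀ c', SatChain u v c' → c' ≠ c →
        List.Lex (· < ·) (labelSeq lab r c) (labelSeq lab r c')) ∧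
      (∀ c', SatChain u v c' → c' ≠ c → ¬ TopAscending lab r c')

/-- `lab` has the unique earliest (UE) property: in each rooted interval `[u,v]_r`,
the smallest label on the cover relations upward from `u` occurs on only one such
cover relation. -/
def HasUE {α Q : Type*} [PartialOrder α] [OrderBot α] [LinearOrder Q]
    (lab : List α → α → α → Q) : Prop :=
  ∀ u v r, SatChain (⊥ : α) u r → u ≤ v →
    ∀ a b, u ⋖ a → a ≤ v → u ⋖ b → b ≤ v →
      (∀ a', u ⋖ a' → a' ≤ v → lab r u a ≤ lab r u a') →
      (∀ a', u ⋖ a' → a' ≤ v → lab r u b ≤ lab r u a') → a = b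

/-- `lab` is self-consistent: whenever `c₀` is the lexicographically strictly first
saturated chain of a rooted interval `[u,v]_r`, with `a` the atom on `c₀` and
`b ≠ a` another atom of `[u,v]_r`, then for every `v'` above both `a` and `b`, every
saturated chain of `[u,v']_r` through `b` is lexicographically later than every
saturated chain of `[u,v']_r` through `a`. -/
def SelfConsistent {α Q : Type*} [PartialOrder α] [OrderBot α] [LinearOrder Q]
    (lab : List α → α → α → Q) : Prop :=
  ∀ u v r, SatChain (⊥ : α) u r → ∀ c₀, SatChain u v c₀ →
    (∀ c, SatChain u v c → c ≠ c₀ →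
      List.Lex (· < ·) (labelSeq lab r c₀) (labelSeq lab r c)) →
    ∀ a, u ⋖ a → a ∈ c₀ →
    ∀ b, u ⋖ b → b ≤ v → b ≠ a →
    ∀ v', a ≤ v' → b ≤ v' →
    ∀ ca cb, SatChain u v' ca → a ∈ ca → SatChain u v' cb → b ∈ cb →
      List.Lex (· < ·) (labelSeq lab r ca) (labelSeq lab r cb)

/-!
Order the atoms of each rooted interval `[u, ⊤]_r` by the label sequence of one fixed chain from
`u` through the atom up to `⊤`.  Self-consistency makes the atom on the lexicographically first
chain of any `[u, v]_r` precede every other atom of `[u, v]_r`, whichever chains were fixed.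
For the GRAO conditions (i)(b) and (ii), take an atom `a` preceded by some atom below `y`, and
the first chain `a ⋖ z ⋯ y` of `[a, y]`.  Since `a` is not first among the atoms of `[u, y]`,
the chain `u ⋖ a ⋖ z ⋯ y` is not the first chain of `[u, y]`, so by the topological CL property
it has a topological descent; the tail is the first chain of `[a, y]` and hence topologically
ascending, so the descent is `u ⋖ a ⋖ z`.  The first chain of `[u, z]` then starts with an atom
other than `a`, which precedes `a` and lies below `z`.
-/

namespace SatChain

variable {α : Type*} [PartialOrder α] {x y z a : α} {c t : List α}

lemma singleton (x : α) : SatChain x x [x] := ⟨List.isChain_singleton _, rfl, rfl⟩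

lemma head_eq (h : SatChain x y (a :: t)) : a = x := by
  simpa using h.2.1

lemma exists_eq_cons (h : SatChain x y c) : ∃ t, c = x :: t := by
  cases c with
  | nil => simp [SatChain] at h
  | cons a t => exact ⟨t, by rw [h.head_eq]⟩

lemma exists_eq_cons_cons (h : SatChain x y c) (hxy : x ≠ y) : ∃ a t, c = x :: a :: t := by
  obtain ⟨s, rfl⟩ := h.exists_eq_cons
  cases s with
  | nil => exact absurd (by simpa using h.2.2) hxy
  | cons a t => exact ⟨a, t, rfl⟩

lemma covBy (h : SatChain x y (x :: a :: t)) : x ⋖ a := (List.isChain_cons_cons.1 h.1).1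

lemma tail (h : SatChain x y (x :: a :: t)) : SatChain a y (a :: t) :=
  ⟨(List.isChain_cons_cons.1 h.1).2, rfl, by rw [← List.getLast?_cons_cons (a := x)]; exact h.2.2⟩

lemma head_mem (h : SatChain x y c) : x ∈ c := by
  obtain ⟨t, rfl⟩ := h.exists_eq_cons
  exact List.mem_cons_self

lemma cons (hxa : x ⋖ a) (h : SatChain a y c) : SatChain x y (x :: c) := by
  obtain ⟨t, rfl⟩ := h.exists_eq_cons
  exact ⟨h.1.cons_cons hxa, rfl, by rw [List.getLast?_cons_cons]; exact h.2.2⟩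

lemma le_of_mem (h : SatChain x y c) (ha : a ∈ c) : a ≤ y := by
  induction c generalizing x a with
  | nil => simp at ha
  | cons b s ih =>
    obtain rfl := h.head_eq
    cases s with
    | nil => simp_all [SatChain]
    | cons b₂ t =>
      rcases List.mem_cons.1 ha with rfl | ha
      · exact h.covBy.le.trans (ih h.tail List.mem_cons_self)
      · exact ih h.tail ha

lemma append (hc : SatChain x y c) (ht : SatChain y z (y :: t)) : SatChain x z (c ++ t) := by
  cases t with
  | nil => simpa [show y = z by simpa using ht.2.2] using hc
  | cons b t =>
    obtain ⟨s, rfl⟩ := hc.exists_eq_cons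
    refine ⟨List.isChain_append.2 ⟨hc.1, ht.tail.1, ?_⟩, rfl, ?_⟩
    · intro p hp q hq
      rw [hc.2.2] at hp
      simp only [Option.mem_def, Option.some.injEq, List.head?_cons] at hp hq
      exact hp ▸ hq ▸ ht.covBy
    · rw [List.getLast?_append, ← List.getLast?_cons_cons (a := y), ht.2.2]
      rfl

lemma concat (hc : SatChain x y c) (hyz : y ⋖ z) : SatChain x z (c ++ [z]) :=
  hc.append ((singleton z).cons hyz)

lemma eq_pair_of_covBy (h : SatChain x y c) (hxy : x ⋖ y) : c = [x, y] := by
  obtain ⟨a, t, rfl⟩ := h.exists_eq_cons_cons hxy.ne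
  obtain rfl : a = y := eq_of_le_of_not_lt (h.le_of_mem (by simp)) (hxy.2 h.covBy.lt)
  cases t with
  | nil => rfl
  | cons b t => exact absurd (h.tail.le_of_mem (by simp)) h.tail.covBy.lt.not_ge

lemma three_le_length (h : SatChain x z c) (hxy : x < y) (hyz : y < z) : 3 ≤ c.length := by
  obtain ⟨a, t, rfl⟩ := h.exists_eq_cons_cons (hxy.trans hyz).ne
  cases t with
  | nil => exact absurd (show a = z by simpa using h.2.2) fun haz => h.covBy.2 hxy (haz ▸ hyz)
  | cons b t => simp

end SatChain

lemma exists_satChain {α : Type*} [PartialOrder α] [Finite α] {x y : α} (hxy : x ≤ y) :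
    ∃ c, SatChain x y c := by
  induction x using WellFoundedGT.induction with
  | _ x ih =>
    obtain rfl | hlt := hxy.eq_or_lt
    · exact ⟨[x], .singleton x⟩
    · obtain ⟨a, hxa, hay⟩ := hlt.exists_covby_le
      obtain ⟨c, hc⟩ := ih a hxa.lt hay
      exact ⟨x :: c, hc.cons hxa⟩

theorem List.Lex.append_of_length_le {β : Type*} {R : β → β → Prop} :
    ∀ {s t : List β} (x y : List β), List.Lex R s t → t.length ≤ s.length →
      List.Lex R (s ++ x) (t ++ y)
  | _, [], _, _, h, _ => absurd h List.not_lex_nil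
  | [], _ :: _, _, _, _, hl => by simp at hl
  | _ :: _, _ :: _, _, _, .rel h, _ => .rel h
  | _ :: _, _ :: _, x, y, .cons h, hl => .cons (append_of_length_le x y h (by simpa using hl))

section LabelSeq

variable {α Q : Type*} (lab : List α → α → α → Q)

lemma length_labelSeq : ∀ (r c : List α), (labelSeq lab r c).length = c.length - 1
  | _, [] => rfl
  | _, [_] => rfl
  | r, _ :: y :: c => by simp [labelSeq, length_labelSeq (r ++ [y]) (y :: c)]

lemma labelSeq_append {w : α} : ∀ {f : List α} (r t : List α), f.getLast? = some w →
    labelSeq lab r (f ++ t) = labelSeq lab r f ++ labelSeq lab (r ++ f.tail) (w :: t)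
  | [], _, _, h => by simp at h
  | [x], r, t, h => by
    obtain rfl : x = w := by simpa using h
    simp [labelSeq]
  | x :: y :: f, r, t, h => by
    have ih := labelSeq_append (r ++ [y]) t (List.getLast?_cons_cons ▸ h)
    simp only [List.cons_append, List.tail_cons] at ih ⊢
    simp [labelSeq, ih]

end LabelSeq

section LexFirst

variable {α Q : Type*} [PartialOrder α] [LinearOrder Q] {lab : List α → α → α → Q}
  {u v p w : α} {r c t : List α}

def IsLexFirst (lab : List α → α → α → Q) (r : List α) (u v : α) (c : List α) : Prop :=
  SatChain u v c ∧ ∀ c', SatChain u v c' → c' ≠ c →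
    List.Lex (· < ·) (labelSeq lab r c) (labelSeq lab r c')

lemma IsTopolCLLabeling.exists_isLexFirst [OrderBot α] (h1 : IsTopolCLLabeling lab)
    (hr : SatChain ⊥ u r) (huv : u ≤ v) : ∃ c, IsLexFirst lab r u v c :=
  let ⟨c, hc, hmin, _⟩ := h1 u v r hr huv
  ⟨c, hc, hmin⟩

lemma IsLexFirst.tail (hc : IsLexFirst lab r u v (u :: p :: t)) :
    IsLexFirst lab (r ++ [p]) p v (p :: t) := by
  refine ⟨hc.1.tail, fun d hd hne => ?_⟩
  obtain ⟨d, rfl⟩ := hd.exists_eq_cons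
  exact List.lex_cons_iff.1 (hc.2 _ (hd.cons hc.1.covBy) (by simpa using hne))

/-- Any other first chain of `[u,w]_r` has at least two labels, so it would already beat
`u ⋖ p ⋖ w` within the first two, and glued to `w ⋯ v` it would beat `u ⋖ p ⋖ w ⋯ v`. -/
lemma IsLexFirst.triple [OrderBot α] (h1 : IsTopolCLLabeling lab) (hr : SatChain ⊥ u r)
    (hc : IsLexFirst lab r u v (u :: p :: w :: t)) : IsLexFirst lab r u w [u, p, w] := by
  have hup : u ⋖ p := hc.1.covBy
  have hpw : p ⋖ w := hc.1.tail.covBy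
  obtain ⟨f, hf⟩ := h1.exists_isLexFirst hr (hup.le.trans hpw.le)
  obtain rfl | hne := eq_or_ne f [u, p, w]
  · exact hf
  exfalso
  have hf_lt := hf.2 _ (((SatChain.singleton w).cons hpw).cons hup) hne.symm
  have hf_len : 2 ≤ (labelSeq lab r f).length := by
    have := hf.1.three_le_length hup.lt hpw.lt
    rw [length_labelSeq]
    omega
  have hc_lt := hc.2 (f ++ t) (hf.1.append hc.1.tail.tail)
    fun h => hne (List.append_cancel_right (show f ++ t = [u, p, w] ++ t from h))
  rw [labelSeq_append lab r t hf.1.2.2, show u :: p :: w :: t = [u, p, w] ++ t from rfl,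
    labelSeq_append lab r t rfl] at hc_lt
  exact List.lt_asymm hc_lt (hf_lt.append_of_length_le _ _ hf_len)

lemma IsLexFirst.topAscending [OrderBot α] (h1 : IsTopolCLLabeling lab) (hr : SatChain ⊥ u r)
    (hc : IsLexFirst lab r u v c) : TopAscending lab r c := by
  induction c generalizing u r with
  | nil => trivial
  | cons x s ih =>
    obtain rfl := hc.1.head_eq
    rcases s with _ | ⟨p, _ | ⟨w, t⟩⟩
    · trivial
    · trivial
    · exact ⟨⟨hc.1.covBy, hc.1.tail.covBy, (hc.triple h1 hr).2⟩,
        ih (hr.concat hc.1.covBy) hc.tail⟩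

end LexFirst

def ChainAtomOrdering.ofKey {α β : Type*} [PartialOrder α] [LinearOrder β]
    (κ : α → List α → α → β) (hκ : ∀ u r, Function.Injective (κ u r)) : ChainAtomOrdering α where
  lt u r a b := κ u r a < κ u r b
  irrefl _ _ _ := lt_irrefl _
  trans _ _ _ _ _ := lt_trans
  total u r _ _ _ _ hab := lt_or_gt_of_ne ((hκ u r).ne hab)

namespace ChainAtomOrdering

variable {α : Type*} [PartialOrder α] (S : ChainAtomOrdering α) {u a b : α} {r : List α}

lemma ne_of_lt (h : S.lt u r a b) : a ≠ b := by
  rintro rfl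
  exact S.irrefl u r a h

lemma lt_asymm (h : S.lt u r a b) : ¬ S.lt u r b a :=
  fun h' => S.irrefl u r a (S.trans u r a b a h h')

end ChainAtomOrdering

section AtomOrdering

variable {α Q : Type*} [PartialOrder α] [BoundedOrder α] [Finite α] [LinearOrder Q]
  {lab : List α → α → α → Q} {u v a b y z : α} {r c t : List α}

noncomputable def chainToTop (x : α) : List α := (exists_satChain (le_top : x ≤ ⊤)).choose

lemma satChain_chainToTop (x : α) : SatChain x ⊤ (chainToTop x) :=
  (exists_satChain le_top).choose_spec

noncomputable def labelAtomOrdering (lab : List α → α → α → Q) : ChainAtomOrdering α :=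
  .ofKey (fun u r a => toLex (labelSeq lab r (u :: chainToTop a), Finite.equivFin α a))
    fun _ _ _ _ h => (Finite.equivFin α).injective (congrArg Prod.snd (toLex.injective h))

lemma labelAtomOrdering_lt_of_isLexFirst (h2 : SelfConsistent lab) (hr : SatChain ⊥ u r)
    (hc : IsLexFirst lab r u v c) (hua : u ⋖ a) (ha : a ∈ c) (hub : u ⋖ b) (hbv : b ≤ v)
    (hba : b ≠ a) : (labelAtomOrdering lab).lt u r a b := by
  have hta := satChain_chainToTop a
  have htb := satChain_chainToTop b
  exact Prod.Lex.lt_iff.2 <| .inl <| h2 u v r hr c hc.1 hc.2 a hua ha b hub hbv hba ⊤ le_top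
    le_top _ _ (hta.cons hua) (.tail _ hta.head_mem) (htb.cons hub) (.tail _ htb.head_mem)

lemma exists_labelAtomOrdering_lt_of_not_topAscent (h1 : IsTopolCLLabeling lab)
    (h2 : SelfConsistent lab) (hr : SatChain ⊥ u r) (hua : u ⋖ a) (haz : a ⋖ z)
    (hna : ¬ TopAscent lab r u a z) :
    ∃ a₁, u ⋖ a₁ ∧ a₁ < z ∧ (labelAtomOrdering lab).lt u r a₁ a := by
  obtain ⟨c, hc⟩ := h1.exists_isLexFirst hr (hua.le.trans haz.le)
  obtain ⟨a₁, t, rfl⟩ := hc.1.exists_eq_cons_cons (hua.lt.trans haz.lt).ne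
  obtain rfl | hne := eq_or_ne a₁ a
  · rw [hc.1.tail.eq_pair_of_covBy haz] at hc
    exact absurd ⟨hua, haz, hc.2⟩ hna
  · have hz : a₁ ≠ z := by
      rintro rfl
      exact hc.1.covBy.2 hua.lt haz.lt
    exact ⟨a₁, hc.1.covBy, (hc.1.le_of_mem (by simp)).lt_of_ne hz,
      labelAtomOrdering_lt_of_isLexFirst h2 hr hc hc.1.covBy (by simp) hua haz.le hne.symm⟩

lemma exists_labelAtomOrdering_lt_of_isLexFirst (h1 : IsTopolCLLabeling lab)
    (h2 : SelfConsistent lab) (hr : SatChain ⊥ u r) (hua : u ⋖ a)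
    (hpre : ∃ a', u ⋖ a' ∧ a' ≤ y ∧ (labelAtomOrdering lab).lt u r a' a)
    (he : IsLexFirst lab (r ++ [a]) a y (a :: z :: t)) :
    ∃ a₁, u ⋖ a₁ ∧ a₁ < z ∧ (labelAtomOrdering lab).lt u r a₁ a := by
  obtain ⟨a', hua', ha'y, ha'a⟩ := hpre
  have hay : a < y := he.1.covBy.lt.trans_le (he.1.le_of_mem (by simp))
  obtain ⟨c₀, hc₀, hc₀_min, hc₀_desc⟩ := h1 u y r hr (hua.le.trans hay.le)
  obtain ⟨a₀, s, rfl⟩ := hc₀.exists_eq_cons_cons (hua.lt.trans hay).ne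
  have ha₀ : a₀ ≠ a := by
    rintro rfl
    exact (labelAtomOrdering lab).lt_asymm ha'a <| labelAtomOrdering_lt_of_isLexFirst h2 hr
      ⟨hc₀, hc₀_min⟩ hua (by simp) hua' ha'y ((labelAtomOrdering lab).ne_of_lt ha'a)
  have hdesc := hc₀_desc _ (he.1.cons hua) (by simp [ha₀.symm])
  refine exists_labelAtomOrdering_lt_of_not_topAscent h1 h2 hr hua he.1.covBy fun hasc => ?_
  exact hdesc ⟨hasc, he.topAscending h1 (hr.concat hua)⟩

theorem isGRAO_labelAtomOrdering (h1 : IsTopolCLLabeling lab) (h2 : SelfConsistent lab)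
    (hr : SatChain ⊥ u r) : IsGRAO (labelAtomOrdering lab) u ⊤ r := by
  induction u using WellFoundedGT.induction generalizing r with
  | _ u ih =>
    refine .step u ⊤ r (fun a hua _ => ih a hua.lt (hr.concat hua)) ?ib ?ii
    case ib =>
      intro a x w hua _ hax hxw _
      have hra := hr.concat hua
      obtain ⟨e, he⟩ := h1.exists_isLexFirst hra (hax.le.trans hxw.le)
      obtain ⟨b, t, rfl⟩ := he.1.exists_eq_cons_cons (hax.lt.trans hxw.lt).ne
      by_cases hb : ∃ a', u ⋖ a' ∧ (labelAtomOrdering lab).lt u r a' a ∧ a' < b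
      · obtain ⟨a', hua', ha'a, ha'b⟩ := hb
        refine .inl ⟨b, ⟨he.1.covBy, he.1.le_of_mem (by simp), fun b' hab' hb'w hb'b => ?_⟩,
          a', hua', le_top, ha'a, ha'b⟩
        exact labelAtomOrdering_lt_of_isLexFirst h2 hra he he.1.covBy (by simp) hab' hb'w hb'b
      · refine .inr fun b' a' _ hb'w hua' _ ha'a ha'b' => hb ?_
        obtain ⟨a₁, hua₁, ha₁b, ha₁a⟩ := exists_labelAtomOrdering_lt_of_isLexFirst h1 h2 hr hua
          ⟨a', hua', ha'b'.le.trans hb'w, ha'a⟩ he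
        exact ⟨a₁, hua₁, ha₁a, ha₁b⟩
    case ii =>
      intro ai aj y hui _ huj _ hij hiy hjy _
      obtain ⟨m, hm⟩ := h1.exists_isLexFirst (hr.concat huj) hjy.le
      obtain ⟨z, t, rfl⟩ := hm.1.exists_eq_cons_cons hjy.ne
      obtain ⟨a₁, hua₁, ha₁z, ha₁j⟩ := exists_labelAtomOrdering_lt_of_isLexFirst h1 h2 hr huj
        ⟨ai, hui, hiy.le, hij⟩ hm
      exact ⟨a₁, z, hua₁, le_top, ha₁j, hm.1.covBy, hm.1.le_of_mem (by simp), ha₁z⟩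

end AtomOrdering

/-- If a finite bounded poset admits a self-consistent topological CL-labeling, then
it admits a generalized recursive atom ordering. -/
theorem stmt_15 {α Q : Type*} [PartialOrder α] [BoundedOrder α] [Fintype α]
    [LinearOrder Q] (lab : List α → α → α → Q)
    (h1 : IsTopolCLLabeling lab) (h2 : SelfConsistent lab) :
    ∃ S : ChainAtomOrdering α, IsGRAO S ⊥ ⊤ [⊥] :=
  ⟨labelAtomOrdering lab, isGRAO_labelAtomOrdering h1 h2 (.singleton ⊥)⟩
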